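/- Let (s,t) be an edge. Suppose an execution contains two transitions A_0 ↦ A_1 and A_2 ↦ A_3 with A_1 ↦* A_2, in each of which node t executes the rule Write(s), and suppose there is a node v ≠ s such that (p_t, m_t) = (v,2) holds in both A_0 and A_2. Then t executes the Reset rule and v executes the rule Write(t) in transitions occurring between A_0 and A_2. -/
import Mathlib


/-!
Formal model of the self-stabilizing maximal-matching algorithm in the
link-register model under read/write atomicity.

Nodes form a finite simple graph `G` on a vertex type `V` whose linear order
plays the role of the distinct identifiers.  A configuration records, for each
node `u`, its pointer `p u : Option V` (`none` = null), its lock variable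
`m u : Fin 3`, and for each (directed) link a register `r u v : RegFlag × Fin 3`.
-/

inductive RegFlag where
  | Idle | You | Other
deriving DecidableEq

abbrev RegVal : Type := RegFlag × Fin 3

inductive Rule (V : Type) where
  | write (a : V)
  | seduction (a : V)
  | marriage (a : V)
  | increase
  | reset
deriving DecidableEq

structure Config (V : Type) where
  p : V → Option V
  m : V → Fin 3
  r : V → V → RegVal

variable {V : Type}

def correctRegisterValue [DecidableEq V] (C : Config V) (u a : V) : RegVal :=
  match C.p u with
  | none => (RegFlag.Idle, 0)
  | some b => if b = a then (RegFlag.You, C.m u) else (RegFlag.Other, C.m u)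

def PRabandonment [LinearOrder V] (C : Config V) (u : V) : Prop :=
  ∃ v, C.p u = some v ∧
    (((C.r v u).1 ≠ RegFlag.You ∧ (v < u ∨ C.m u ≠ 0)) ∨
     (C.r v u = (RegFlag.Other, 2) ∧ u < v))

def PRreset [LinearOrder V] (C : Config V) (u : V) : Prop :=
  ∃ v, C.p u = some v ∧ (C.r v u).1 = RegFlag.You ∧
    ((C.m u = 0 ∧ (C.r v u).2 = 2) ∨
     (C.m u = 2 ∧ (C.r v u).2 = 0) ∨
     (C.m u = 0 ∧ (C.r v u).2 = 1 ∧ v < u) ∨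
     (C.m u = 1 ∧ (C.r v u).2 = 0 ∧ u < v) ∨
     (C.m u = 1 ∧ (C.r v u).2 = 2 ∧ u < v) ∨
     (C.m u = 2 ∧ (C.r v u).2 = 1 ∧ v < u))

/-- The guard of each rule of node `u` in configuration `C`. -/
def eligible [LinearOrder V] (G : SimpleGraph V) (C : Config V) (u : V) : Rule V → Prop
  | .write a => G.Adj u a ∧ C.r u a ≠ correctRegisterValue C u a
  | .seduction a => G.Adj u a ∧ C.p u = none ∧ C.r u a = correctRegisterValue C u a ∧
      C.r a u = (RegFlag.Idle, 0) ∧ u < a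
  | .marriage a => G.Adj u a ∧ C.p u = none ∧ C.r u a = correctRegisterValue C u a ∧
      C.r a u = (RegFlag.You, 0) ∧ a < u
  | .increase => ∃ v, C.p u = some v ∧ C.r u v = correctRegisterValue C u v ∧
      (C.r v u).1 = RegFlag.You ∧
      ((C.m u = 0 ∧ ((u < v ∧ (C.r v u).2 = 1) ∨ (v < u ∧ (C.r v u).2 = 0))) ∨
       (C.m u = 1 ∧ ((u < v ∧ (C.r v u).2 = 1) ∨ (v < u ∧ (C.r v u).2 = 2))))
  | .reset => ∃ v, C.p u = some v ∧ C.r u v = correctRegisterValue C u v ∧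
      (PRabandonment C u ∨ PRreset C u)

/-- Simultaneous application of (at most) one rule per node.  `A u = some R`
means node `u` executes rule `R`; each action only modifies the data owned by
the acting node. -/
def step [DecidableEq V] (C : Config V) (A : V → Option (Rule V)) : Config V where
  p u :=
    match A u with
    | some (Rule.seduction a) => some a
    | some (Rule.marriage a) => some a
    | some Rule.reset => none
    | _ => C.p u
  m u :=
    match A u with
    | some (Rule.seduction _) => 0
    | some (Rule.marriage _) => 0
    | some Rule.reset => 0
    | some Rule.increase => C.m u + 1
    | _ => C.m u
  r u a :=
    match A u with
    | some (Rule.write b) => if a = b then correctRegisterValue C u a else C.r u a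
    | _ => C.r u a

/-- An execution `C_0, A_0, C_1, A_1, …, C_T`: at each transition `i < T`, a
nonempty set of eligible rules (at most one per node) is executed
simultaneously. -/
structure Execution [LinearOrder V] (G : SimpleGraph V) where
  T : ℕ
  conf : ℕ → Config V
  act : ℕ → V → Option (Rule V)
  act_nonempty : ∀ i < T, ∃ u, (act i u).isSome
  act_eligible : ∀ i < T, ∀ u R, act i u = some R → eligible G (conf i) u R
  conf_succ : ∀ i < T, conf (i + 1) = step (conf i) (act i)

/-- A configuration is stable if no rule is eligible at any node. -/
def stableConfig [LinearOrder V] (G : SimpleGraph V) (C : Config V) : Prop :=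
  ∀ u R, ¬ eligible G C u R

/-- The edge `(s,t)` (with `s < t` intended) is in state `(You, α, β)`. -/
def edgeState (C : Config V) (s t : V) (α β : Fin 3) : Prop :=
  C.p s = some t ∧ C.p t = some s ∧ C.m s = α ∧ C.m t = β

def updatedCorrectState (C : Config V) (s t : V) (α β : Fin 3) : Prop :=
  edgeState C s t α β ∧ C.r s t = (RegFlag.You, α) ∧ C.r t s = (RegFlag.You, β) ∧
    ((α, β) = ((0 : Fin 3), (0 : Fin 3)) ∨ (α, β) = (0, 1) ∨ (α, β) = (1, 1) ∨
     (α, β) = (2, 1) ∨ (α, β) = (2, 2))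

def toUpdateCorrectState (C : Config V) (s t : V) (α β : Fin 3) : Prop :=
  edgeState C s t α β ∧
    ((((α, β) = ((0 : Fin 3), (1 : Fin 3)) ∨ (α, β) = (2, 2)) ∧
        C.r s t = (RegFlag.You, α) ∧ C.r t s = (RegFlag.You, β - 1)) ∨
     (((α, β) = ((1 : Fin 3), (1 : Fin 3)) ∨ (α, β) = (2, 1)) ∧
        C.r s t = (RegFlag.You, α - 1) ∧ C.r t s = (RegFlag.You, β)))

def correctState (C : Config V) (s t : V) (α β : Fin 3) : Prop :=
  updatedCorrectState C s t α β ∨ toUpdateCorrectState C s t α β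

/-- Node `u` executes a `v`-rule in transition `k`: one of `Write(v)`,
`Seduction(v)`, `Marriage(v)`, a `v`-`Increase` or a `v`-`Reset`. -/
def execVRule [LinearOrder V] {G : SimpleGraph V} (E : Execution G) (k : ℕ) (u v : V) : Prop :=
  k < E.T ∧
    (E.act k u = some (Rule.write v) ∨ E.act k u = some (Rule.seduction v) ∨
     E.act k u = some (Rule.marriage v) ∨
     ((E.act k u = some Rule.increase ∨ E.act k u = some Rule.reset) ∧
       (E.conf k).p u = some v))

section Stmt19Aux
variable {V : Type} [LinearOrder V] {G : SimpleGraph V}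

lemma step_r_ne (C : Config V) (A : V → Option (Rule V)) {t s : V}
    (h : A t ≠ some (Rule.write s)) : (step C A).r t s = C.r t s := by
  simp only [step]
  rcases hA : A t with _ | R
  · rfl
  · cases R with
    | write b =>
      simp only
      rw [if_neg]
      rintro rfl; exact h hA
    | seduction a => rfl
    | marriage a => rfl
    | increase => rfl
    | reset => rfl

lemma r_persist (E : Execution G) {a b : ℕ} (hab : a ≤ b) (hb : b ≤ E.T) (t s : V)
    (h : ∀ k, a ≤ k → k < b → E.act k t ≠ some (Rule.write s)) :
    (E.conf b).r t s = (E.conf a).r t s := by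
  induction b, hab using Nat.le_induction with
  | base => rfl
  | succ b hab ih =>
    rw [E.conf_succ b (by omega), step_r_ne _ _ (h b hab (by omega)),
      ih (by omega) (fun k h1 h2 => h k h1 (by omega))]

end Stmt19Aux

/-- If `t` executes `Write(s)` in transitions `i` and `j`
(`i + 1 ≤ j`) and `(p_t,m_t) = (v,2)` with `v ≠ s` holds in both `A_0 = conf i`
and `A_2 = conf j`, then `t` executes a `Reset` and `v` executes a `Write(t)`
in transitions between `A_0` and `A_2`. -/
theorem stmt_19 {V : Type} [Fintype V] [LinearOrder V] (G : SimpleGraph V)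
    (s t : V) (hadj : G.Adj s t) (E : Execution G)
    (i j : ℕ) (hij : i + 1 ≤ j) (hjT : j < E.T)
    (hi : E.act i t = some (Rule.write s)) (hj : E.act j t = some (Rule.write s))
    (v : V) (hvs : v ≠ s)
    (h0p : (E.conf i).p t = some v) (h0m : (E.conf i).m t = 2)
    (h2p : (E.conf j).p t = some v) (h2m : (E.conf j).m t = 2) :
    (∃ k, i ≤ k ∧ k + 1 ≤ j ∧ E.act k t = some Rule.reset) ∧
    (∃ k, i ≤ k ∧ k + 1 ≤ j ∧ E.act k v = some (Rule.write t)) := by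
  have hiT : i < E.T := by omega
  have hreset : ∃ k, i ≤ k ∧ k + 1 ≤ j ∧ E.act k t = some Rule.reset := by
    by_contra hcr
    push_neg at hcr
    have inv : ∀ k, i + 1 ≤ k → k ≤ j →
        (E.conf k).p t = some v ∧ (E.conf k).m t = 2 ∧
        (E.conf k).r t s = (RegFlag.Other, 2) := by
      intro k hk1
      induction k, hk1 using Nat.le_induction with
      | base =>
        intro _
        rw [E.conf_succ i hiT]
        refine ⟨?_, ?_, ?_⟩ <;>
          simp [step, hi, correctRegisterValue, h0p, h0m, hvs]
      | succ k hk ih =>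
        intro hkj
        obtain ⟨hp, hm, hr⟩ := ih (by omega)
        have hkT : k < E.T := by omega
        rw [E.conf_succ k hkT]
        rcases hA : E.act k t with _ | R
        · exact ⟨by simp [step, hA, hp], by simp [step, hA, hm], by simp [step, hA, hr]⟩
        cases R with
        | write b =>
          refine ⟨by simp [step, hA, hp], by simp [step, hA, hm], ?_⟩
          by_cases hsb : s = b
          · subst hsb
            simp [step, hA, correctRegisterValue, hp, hvs, hm]
          · simp [step, hA, hsb, hr]
        | seduction a =>
          exact absurd (E.act_eligible k hkT t _ hA).2.1 (by simp [hp])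
        | marriage a =>
          exact absurd (E.act_eligible k hkT t _ hA).2.1 (by simp [hp])
        | increase =>
          obtain ⟨w, hw, _, _, hd⟩ := E.act_eligible k hkT t _ hA
          rcases hd with ⟨h0, _⟩ | ⟨h1, _⟩
          · rw [hm] at h0; exact absurd h0 (by decide)
          · rw [hm] at h1; exact absurd h1 (by decide)
        | reset => exact absurd hA (hcr k (by omega) (by omega))
    obtain ⟨-, -, hr⟩ := inv j hij le_rfl
    have helig := E.act_eligible j hjT t _ hj
    exact helig.2 (by rw [hr]; simp [correctRegisterValue, h2p, hvs, h2m])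
  refine ⟨hreset, ?_⟩
  obtain ⟨k0, hk0i, hk0j, hk0r⟩ := hreset
  by_contra hc
  push_neg at hc
  have hk0T : k0 < E.T := by omega
  have hnone : (E.conf (k0 + 1)).p t = none := by
    rw [E.conf_succ k0 hk0T]; simp [step, hk0r]
  haveI : DecidablePred (fun k => (E.conf k).p t = none) := fun k => inferInstance
  set k1 := Nat.findGreatest (fun k => (E.conf k).p t = none) j with hk1def
  have hk1ge : k0 + 1 ≤ k1 := Nat.le_findGreatest hk0j hnone
  have hk1le : k1 ≤ j := Nat.findGreatest_le j
  have hk1P : (E.conf k1).p t = none :=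
    Nat.findGreatest_spec (P := fun k => (E.conf k).p t = none) hk0j hnone
  have hmax : ∀ k, k1 < k → k ≤ j → (E.conf k).p t ≠ none :=
    fun k h1 h2 => Nat.findGreatest_is_greatest
      (P := fun k => (E.conf k).p t = none) h1 h2
  clear hk1def
  clear_value k1
  have hk1lt : k1 < j :=
    lt_of_le_of_ne hk1le (by rintro rfl; rw [h2p] at hk1P; cases hk1P)
  have hk1T : k1 < E.T := by omega
  have hnext : (E.conf (k1 + 1)).p t ≠ none := hmax (k1 + 1) (Nat.lt_succ_self k1) (by omega)
  have key : ∀ a : V, (E.conf (k1 + 1)).p t = some a →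
      (E.conf (k1 + 1)).m t = 0 →
      ((E.conf k1).r a t = (RegFlag.Idle, 0) ∧ t < a ∨
       (E.conf k1).r a t = (RegFlag.You, 0) ∧ a < t) → False := by
    intro a hp1 hm1 hstart
    have inv2 : ∀ k, k1 + 1 ≤ k → k ≤ j → (E.conf k).p t = some a := by
      intro k hk
      induction k, hk using Nat.le_induction with
      | base => intro _; exact hp1
      | succ k hk ih =>
        intro hkj
        have hp := ih (by omega)
        have hkT : k < E.T := by omega
        rw [E.conf_succ k hkT]
        rcases hA : E.act k t with _ | R
        · simp [step, hA, hp]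
        cases R with
        | write b => simp [step, hA, hp]
        | increase => simp [step, hA, hp]
        | seduction b =>
          exact absurd (E.act_eligible k hkT t _ hA).2.1 (by simp [hp])
        | marriage b =>
          exact absurd (E.act_eligible k hkT t _ hA).2.1 (by simp [hp])
        | reset =>
          exact absurd (by rw [E.conf_succ k hkT]; simp [step, hA] :
            (E.conf (k + 1)).p t = none) (hmax (k + 1) (by omega) (by omega))
    have hav : a = v := by
      have h := inv2 j (by omega) le_rfl
      rw [h2p] at h
      exact Option.some_inj.mp h.symm
    subst hav
    haveI : DecidablePred (fun k => k1 + 1 ≤ k ∧ (E.conf k).m t ≠ 2) :=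
      fun k => inferInstance
    set k2 := Nat.findGreatest (fun k => k1 + 1 ≤ k ∧ (E.conf k).m t ≠ 2) j with hk2def
    have hbase : k1 + 1 ≤ k1 + 1 ∧ (E.conf (k1 + 1)).m t ≠ 2 :=
      ⟨le_rfl, by rw [hm1]; decide⟩
    have hk2ge : k1 + 1 ≤ k2 := Nat.le_findGreatest (by omega) hbase
    have hk2le : k2 ≤ j := Nat.findGreatest_le j
    have hk2spec : k1 + 1 ≤ k2 ∧ (E.conf k2).m t ≠ 2 :=
      Nat.findGreatest_spec (P := fun k => k1 + 1 ≤ k ∧ (E.conf k).m t ≠ 2)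
        (by omega : k1 + 1 ≤ j) hbase
    have hmax2 : ∀ k, k2 < k → k ≤ j → ¬(k1 + 1 ≤ k ∧ (E.conf k).m t ≠ 2) :=
      fun k h1 h2 => Nat.findGreatest_is_greatest
        (P := fun k => k1 + 1 ≤ k ∧ (E.conf k).m t ≠ 2) h1 h2
    clear hk2def
    clear_value k2
    have hk2lt : k2 < j :=
      lt_of_le_of_ne hk2le (by rintro rfl; exact hk2spec.2 h2m)
    have hk2T : k2 < E.T := by omega
    have hm2' : (E.conf (k2 + 1)).m t = 2 := by
      have hng := hmax2 (k2 + 1) (Nat.lt_succ_self k2) (by omega)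
      by_contra hne
      exact hng ⟨by omega, hne⟩
    rw [E.conf_succ k2 hk2T] at hm2'
    rcases hA2 : E.act k2 t with _ | R
    · exact hk2spec.2 (by simpa [step, hA2] using hm2')
    cases R with
    | write b => exact hk2spec.2 (by simpa [step, hA2] using hm2')
    | seduction b => simp [step, hA2] at hm2'
    | marriage b => simp [step, hA2] at hm2'
    | reset => simp [step, hA2] at hm2'
    | increase =>
      obtain ⟨w, hw, -, hflag, hd⟩ := E.act_eligible k2 hk2T t _ hA2
      have hpv : (E.conf k2).p t = some a := inv2 k2 hk2ge hk2le
      rw [hpv] at hw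
      have hwa : w = a := (Option.some_inj.mp hw).symm
      rw [hwa] at hflag hd
      have hm2 : (E.conf k2).m t = 1 := by
        have hx : (E.conf k2).m t + 1 = 2 := by simpa [step, hA2] using hm2'
        generalize (E.conf k2).m t = x at hx ⊢
        revert hx; revert x; decide
      have hrc : (E.conf k2).r a t = (E.conf k1).r a t := by
        apply r_persist E (by omega : k1 ≤ k2) (by omega) a t
        intro k h1 h2
        exact hc k (by omega) (by omega)
      rcases hd with ⟨h0, -⟩ | ⟨-, hd1⟩
      · rw [hm2] at h0; exact absurd h0 (by decide)
      rcases hstart with ⟨hreg, hlt⟩ | ⟨hreg, hlt⟩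
      · rw [hrc, hreg] at hflag; exact absurd hflag (by decide)
      · rcases hd1 with ⟨hlt2, -⟩ | ⟨-, h2r⟩
        · exact absurd hlt2 (not_lt.mpr hlt.le)
        · rw [hrc, hreg] at h2r; exact absurd h2r (by decide)
  rcases hA1 : E.act k1 t with _ | R
  · exact hnext (by rw [E.conf_succ k1 hk1T]; simp [step, hA1, hk1P])
  cases R with
  | write b => exact hnext (by rw [E.conf_succ k1 hk1T]; simp [step, hA1, hk1P])
  | increase => exact hnext (by rw [E.conf_succ k1 hk1T]; simp [step, hA1, hk1P])
  | reset => exact hnext (by rw [E.conf_succ k1 hk1T]; simp [step, hA1])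
  | seduction a =>
    have he := E.act_eligible k1 hk1T t _ hA1
    exact key a (by rw [E.conf_succ k1 hk1T]; simp [step, hA1])
      (by rw [E.conf_succ k1 hk1T]; simp [step, hA1])
      (Or.inl ⟨he.2.2.2.1, he.2.2.2.2⟩)
  | marriage a =>
    have he := E.act_eligible k1 hk1T t _ hA1
    exact key a (by rw [E.conf_succ k1 hk1T]; simp [step, hA1])
      (by rw [E.conf_succ k1 hk1T]; simp [step, hA1])
      (Or.inr ⟨he.2.2.2.1, he.2.2.2.2⟩)
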